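/- arXiv:2203.09291 — 2 statements merged into one kernel-verified Lean document; each statement's English description precedes it below -/
import Mathlib

section
/- For N, M ≥ 1, consider the map φ: S_{N+M} → ℝ given by φ(ρ, τ) = ‖τ‖, where (ρ, τ) denotes the decomposition of a point of the sphere of radius √(N+M) in ℝ^{N+M} into its first N and last M coordinates. Then for every r ∈ (0, √(N+M)), the level set φ^{-1}(r) equals S_N(√(N+M−r²)) × S_M(r), and the Jacobian of the differential of φ at any point (ρ,τ) with 0 < ‖τ‖ < √(N+M) equals √((N+M−‖τ‖²)/(N+M)). -/
/-!
On the sphere `‖x‖² = N + M` we have `‖ρ‖² + ‖τ‖² = N + M`, which gives the level sets.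
The map `φ` is the norm composed with the coordinate projection `τ`, a coisometry, so its
gradient is `τ† (τ / ‖τ‖)`: a unit vector whose inner product with `x` is `‖τ‖`. Its
component orthogonal to `x` therefore has squared length `1 - ‖τ‖² / (N + M)`.
-/

section

variable {E F : Type*} [NormedAddCommGroup E] [InnerProductSpace ℝ E]
  [NormedAddCommGroup F] [InnerProductSpace ℝ F]

theorem norm_sub_inner_div_smul_sq (x v : E) :
    ‖v - (inner ℝ x v / ‖x‖ ^ 2) • x‖ ^ 2 = ‖v‖ ^ 2 - inner ℝ x v ^ 2 / ‖x‖ ^ 2 := by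
  rcases eq_or_ne x 0 with rfl | hx
  · simp
  rw [norm_sub_sq_real, real_inner_smul_right, norm_smul, real_inner_comm, mul_pow,
    Real.norm_eq_abs, sq_abs]
  field_simp
  ring

variable [CompleteSpace E] [CompleteSpace F]

theorem hasGradientAt_norm {y : F} (hy : y ≠ 0) : HasGradientAt (‖·‖) (‖y‖⁻¹ • y) y := by
  have hsq : ‖y‖ ^ 2 ≠ 0 := by positivity
  have h := (hasStrictFDerivAt_norm_sq y).hasFDerivAt.sqrt hsq
  simp only [Real.sqrt_sq (norm_nonneg _)] at h
  rw [hasGradientAt_iff_hasFDerivAt]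
  refine h.congr_fderiv ?_
  ext z
  simp
  field_simp

theorem HasGradientAt.comp_continuousLinearMap {f : F → ℝ} {g : F} {x : E} (L : E →L[ℝ] F)
    (hf : HasGradientAt f g (L x)) : HasGradientAt (f ∘ L) (L.adjoint g) x := by
  rw [hasGradientAt_iff_hasFDerivAt] at hf ⊢
  refine (hf.comp x L.hasFDerivAt).congr_fderiv ?_
  ext z
  simp [ContinuousLinearMap.adjoint_inner_left]

end

theorem ContinuousLinearMap.norm_adjoint_apply_of_apply_adjoint {𝕜 E F : Type*} [RCLike 𝕜]
    [NormedAddCommGroup E] [InnerProductSpace 𝕜 E] [CompleteSpace E]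
    [NormedAddCommGroup F] [InnerProductSpace 𝕜 F] [CompleteSpace F]
    {A : E →L[𝕜] F} (hA : ∀ y, A (A.adjoint y) = y) (y : F) : ‖A.adjoint y‖ = ‖y‖ := by
  have h : ‖A.adjoint y‖ ^ 2 = ‖y‖ ^ 2 := by
    rw [@norm_sq_eq_re_inner 𝕜, @norm_sq_eq_re_inner 𝕜, ContinuousLinearMap.adjoint_inner_left,
      hA]
  exact (pow_left_inj₀ (norm_nonneg _) (norm_nonneg _) two_ne_zero).mp h

namespace EuclideanSpace

variable {𝕜 : Type*} [RCLike 𝕜] (N M : ℕ)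

def finAddFst : EuclideanSpace 𝕜 (Fin (N + M)) →L[𝕜] EuclideanSpace 𝕜 (Fin N) :=
  LinearMap.toContinuousLinearMap
    { toFun := fun x => (WithLp.equiv 2 (Fin N → 𝕜)).symm fun i => x (Fin.castAdd M i)
      map_add' := fun _ _ => rfl
      map_smul' := fun _ _ => rfl }

def finAddSnd : EuclideanSpace 𝕜 (Fin (N + M)) →L[𝕜] EuclideanSpace 𝕜 (Fin M) :=
  LinearMap.toContinuousLinearMap
    { toFun := fun x => (WithLp.equiv 2 (Fin M → 𝕜)).symm fun i => x (Fin.natAdd N i)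
      map_add' := fun _ _ => rfl
      map_smul' := fun _ _ => rfl }

variable {N M}

theorem finAddFst_apply (x : EuclideanSpace 𝕜 (Fin (N + M))) :
    finAddFst N M x = (WithLp.equiv 2 (Fin N → 𝕜)).symm fun i => x (Fin.castAdd M i) := rfl

theorem finAddSnd_apply (x : EuclideanSpace 𝕜 (Fin (N + M))) :
    finAddSnd N M x = (WithLp.equiv 2 (Fin M → 𝕜)).symm fun i => x (Fin.natAdd N i) := rfl

theorem norm_sq_eq_finAddFst_add_finAddSnd (x : EuclideanSpace 𝕜 (Fin (N + M))) :
    ‖x‖ ^ 2 = ‖finAddFst N M x‖ ^ 2 + ‖finAddSnd N M x‖ ^ 2 := by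
  simp [norm_sq_eq, finAddFst_apply, finAddSnd_apply, Fin.sum_univ_add]

theorem finAddSnd_single_natAdd (i : Fin M) (c : 𝕜) :
    finAddSnd N M (single (Fin.natAdd N i) c) = single i c := by
  ext k
  simp [finAddSnd_apply, PiLp.single_apply]

theorem finAddSnd_adjoint_apply (u : EuclideanSpace 𝕜 (Fin M)) :
    finAddSnd N M ((finAddSnd N M).adjoint u) = u := by
  ext i
  have := ContinuousLinearMap.adjoint_inner_right (finAddSnd N M) (single (Fin.natAdd N i) 1) u
  simp only [finAddSnd_single_natAdd, inner_single_left, map_one, one_mul] at this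
  simpa [finAddSnd_apply] using this

theorem norm_adjoint_finAddSnd_apply (u : EuclideanSpace 𝕜 (Fin M)) :
    ‖(finAddSnd N M).adjoint u‖ = ‖u‖ :=
  ContinuousLinearMap.norm_adjoint_apply_of_apply_adjoint finAddSnd_adjoint_apply u

theorem sphere_inter_norm_finAddSnd_eq {R r : ℝ} (hr : r ≤ R) :
    {x : EuclideanSpace ℝ (Fin (N + M)) | x ∈ Metric.sphere 0 R ∧ ‖finAddSnd N M x‖ = r} =
      {x | ‖finAddFst N M x‖ = √(R ^ 2 - r ^ 2) ∧ ‖finAddSnd N M x‖ = r} := by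
  ext x
  simp only [Set.mem_ofPred_eq, mem_sphere_zero_iff_norm]
  have h := norm_sq_eq_finAddFst_add_finAddSnd x
  constructor
  · rintro ⟨hx, hτ⟩
    refine ⟨?_, hτ⟩
    rw [← hx, ← hτ, h, add_sub_cancel_right, Real.sqrt_sq (norm_nonneg _)]
  · rintro ⟨hρ, hτ⟩
    refine ⟨?_, hτ⟩
    have hr₀ : 0 ≤ r := hτ ▸ norm_nonneg _
    have hx : ‖x‖ ^ 2 = R ^ 2 := by
      rw [h, hρ, hτ, Real.sq_sqrt (by nlinarith)]
      ring
    exact (pow_left_inj₀ (norm_nonneg _) (hr₀.trans hr) two_ne_zero).mp hx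

theorem hasGradientAt_norm_finAddSnd {x : EuclideanSpace ℝ (Fin (N + M))}
    (hx : finAddSnd N M x ≠ 0) :
    HasGradientAt (fun y => ‖finAddSnd N M y‖)
      ((finAddSnd N M).adjoint (‖finAddSnd N M x‖⁻¹ • finAddSnd N M x)) x :=
  (hasGradientAt_norm hx).comp_continuousLinearMap _

end EuclideanSpace

open EuclideanSpace in
theorem stmt11_general (N M : ℕ)
    (φ : EuclideanSpace ℝ (Fin (N + M)) → ℝ)
    (hφ : ∀ x, φ x = ‖(WithLp.equiv 2 (Fin M → ℝ)).symm
      (fun i : Fin M => x (Fin.natAdd N i))‖) :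
    (∀ r : ℝ, 0 < r → r < Real.sqrt ((N : ℝ) + M) →
      {x : EuclideanSpace ℝ (Fin (N + M)) |
          x ∈ Metric.sphere 0 (Real.sqrt ((N : ℝ) + M)) ∧ φ x = r} =
        {x : EuclideanSpace ℝ (Fin (N + M)) |
          ‖(WithLp.equiv 2 (Fin N → ℝ)).symm (fun i : Fin N => x (Fin.castAdd M i))‖ =
            Real.sqrt ((N : ℝ) + M - r ^ 2) ∧
          ‖(WithLp.equiv 2 (Fin M → ℝ)).symm (fun i : Fin M => x (Fin.natAdd N i))‖ = r}) ∧
    (∀ x : EuclideanSpace ℝ (Fin (N + M)),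
      x ∈ Metric.sphere 0 (Real.sqrt ((N : ℝ) + M)) →
      0 < φ x → φ x < Real.sqrt ((N : ℝ) + M) →
      ‖gradient φ x -
          ((inner ℝ x (gradient φ x) : ℝ) / ((N : ℝ) + M)) • x‖ =
        Real.sqrt (((N : ℝ) + M - (φ x) ^ 2) / ((N : ℝ) + M))) := by
  obtain rfl : φ = fun x => ‖finAddSnd N M x‖ := funext hφ
  have hNM : √((N : ℝ) + M) ^ 2 = N + M := Real.sq_sqrt (by positivity)
  refine ⟨fun r _ hr => ?_, fun x hx hpos hlt => ?_⟩
  · have h := sphere_inter_norm_finAddSnd_eq (N := N) (M := M) hr.le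
    rwa [hNM] at h
  · dsimp only at hpos hlt ⊢
    rw [(hasGradientAt_norm_finAddSnd (norm_pos_iff.mp hpos)).gradient]
    generalize hτ_def : finAddSnd N M x = τ at hpos hlt ⊢
    set g := (finAddSnd N M).adjoint (‖τ‖⁻¹ • τ)
    have hinner : inner ℝ x g = ‖τ‖ := by
      rw [ContinuousLinearMap.adjoint_inner_right, hτ_def, real_inner_smul_right,
        real_inner_self_eq_norm_sq]
      field_simp
    have hg : ‖g‖ = 1 := by
      rw [norm_adjoint_finAddSnd_apply, norm_smul, norm_inv, norm_norm, inv_mul_cancel₀ hpos.ne']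
    have hx : (N : ℝ) + M = ‖x‖ ^ 2 := by rw [mem_sphere_zero_iff_norm.mp hx, hNM]
    have hx₀ : ‖x‖ ^ 2 ≠ 0 := by rw [← hx, ← hNM]; exact pow_ne_zero 2 (hpos.trans hlt).ne'
    rw [hx, ← Real.sqrt_sq (norm_nonneg _), norm_sub_inner_div_smul_sq, hinner, hg, one_pow,
      one_sub_div hx₀]

/-- For `φ(ρ,τ) = ‖τ‖` on the sphere `S_{N+M}` of radius `√(N+M)` in `ℝ^{N+M}`:
the level set `φ⁻¹(r)` equals `S_N(√(N+M-r²)) × S_M(r)` (identifying points of `ℝ^{N+M}`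
with pairs of their first `N` and last `M` coordinates), and the Jacobian of the
differential of `φ` at a point with `0 < ‖τ‖ < √(N+M)` — i.e. the norm of the projection
of the gradient of `φ` onto the tangent space of the sphere — equals
`√((N+M-‖τ‖²)/(N+M))`. -/
theorem stmt11 (N M : ℕ) (hN : 1 ≤ N) (hM : 1 ≤ M)
    (φ : EuclideanSpace ℝ (Fin (N + M)) → ℝ)
    (hφ : ∀ x, φ x = ‖(WithLp.equiv 2 (Fin M → ℝ)).symm
      (fun i : Fin M => x (Fin.natAdd N i))‖) :
    (∀ r : ℝ, 0 < r → r < Real.sqrt ((N : ℝ) + M) →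
      {x : EuclideanSpace ℝ (Fin (N + M)) |
          x ∈ Metric.sphere 0 (Real.sqrt ((N : ℝ) + M)) ∧ φ x = r} =
        {x : EuclideanSpace ℝ (Fin (N + M)) |
          ‖(WithLp.equiv 2 (Fin N → ℝ)).symm (fun i : Fin N => x (Fin.castAdd M i))‖ =
            Real.sqrt ((N : ℝ) + M - r ^ 2) ∧
          ‖(WithLp.equiv 2 (Fin M → ℝ)).symm (fun i : Fin M => x (Fin.natAdd N i))‖ = r}) ∧
    (∀ x : EuclideanSpace ℝ (Fin (N + M)),
      x ∈ Metric.sphere 0 (Real.sqrt ((N : ℝ) + M)) →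
      0 < φ x → φ x < Real.sqrt ((N : ℝ) + M) →
      ‖gradient φ x -
          ((inner ℝ x (gradient φ x) : ℝ) / ((N : ℝ) + M)) • x‖ =
        Real.sqrt (((N : ℝ) + M - (φ x) ^ 2) / ((N : ℝ) + M))) :=
  stmt11_general N M φ hφ
end

section
/- Fix c ∈ (1/4, 1/2), set s_N = N^c, and for x = (x_p)_{p≥1} with x_p ∈ [1,2], define η_N^x(t) = s_N² Σ_{p≥1} 4^{−p} x_p² t^p for t ∈ [−1,1]. Then for all N, M ≥ 1, all x_p, y_p ∈ [1,2], all R¹, R² ∈ [−1,1], and R = (N·R¹ + M·R²)/(N+M): |η_{N+M}^x(R) − η_N^x(R¹) − η_M^y(R²)| ≤ (2M/(N+M))·s_{N+M}²·Σ_{p≥1} 4^{1−p} p + (s_{N+M}² − s_N²)·Σ_{p≥1} 4^{1−p} + s_M²·Σ_{p≥1} 4^{1−p}; in particular, for N large enough this quantity is at most C·M·(N+M)^{2c−1} + C·M^{2c} for a universal constant C > 0. -/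
/-!
With `S_z(t) = ∑_{p ≥ 1} 4^{-p} z_p² t^p` we have
`η_{N+M}^x(R) - η_N^x(R¹) - η_M^y(R²)
  = s_{N+M}² (S_x(R) - S_x(R¹)) + (s_{N+M}² - s_N²) S_x(R¹) - s_M² S_y(R²)`.
As `z_p² ≤ 4`, on `[-1, 1]` the series `S_z` is bounded by `∑ 4^{1-p} = 4/3` and is Lipschitz with
constant `∑ 4^{1-p} p = 16/9`, while `|R - R¹| ≤ 2M/(N+M)`. The asymptotic form then follows from
the subadditivity `(N+M)^{2c} - N^{2c} ≤ M^{2c}`, valid because `2c ≤ 1`.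
-/

open Real

lemma four_rpow_neg_natCast (p : ℕ) : (4 : ℝ) ^ (-(p : ℝ)) = (1 / 4) ^ p := by
  rw [rpow_neg_natCast, zpow_neg, zpow_natCast, one_div, inv_pow]

lemma hasSum_quarter_pow : HasSum (fun p : ℕ => (1 / 4 : ℝ) ^ p) (4 / 3) := by
  convert hasSum_geometric_of_lt_one (r := (1 / 4 : ℝ)) (by norm_num) (by norm_num) using 1
  norm_num

lemma hasSum_succ_mul_quarter_pow :
    HasSum (fun p : ℕ => ((p : ℝ) + 1) * (1 / 4) ^ p) (16 / 9) := by
  have h := hasSum_choose_mul_geometric_of_norm_lt_one (𝕜 := ℝ) 1 (r := 1 / 4) (by norm_num)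
  norm_num at h
  exact h

lemma tsum_four_rpow_neg : ∑' p : ℕ, (4 : ℝ) ^ (-(p : ℝ)) = 4 / 3 := by
  simp only [four_rpow_neg_natCast, hasSum_quarter_pow.tsum_eq]

lemma tsum_four_rpow_neg_mul_succ :
    ∑' p : ℕ, (4 : ℝ) ^ (-(p : ℝ)) * ((p : ℝ) + 1) = 16 / 9 := by
  simp only [four_rpow_neg_natCast, mul_comm _ ((_ : ℝ) + 1), hasSum_succ_mul_quarter_pow.tsum_eq]

/-- The summand of index `p + 1` of `S_z(t)`. -/
noncomputable def covTerm (z : ℕ → ℝ) (t : ℝ) (p : ℕ) : ℝ :=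
  (4 : ℝ) ^ (-((p : ℝ) + 1)) * z (p + 1) ^ 2 * t ^ (p + 1)

lemma covTerm_eq (z : ℕ → ℝ) (t : ℝ) (p : ℕ) :
    covTerm z t p = (1 / 4) ^ p * (z (p + 1) / 2) ^ 2 * t ^ (p + 1) := by
  have h : -((p : ℝ) + 1) = -((p + 1 : ℕ) : ℝ) := by push_cast; ring
  rw [covTerm, h, four_rpow_neg_natCast, pow_succ]
  ring

lemma quarter_pow_mul_sq_half_le {z : ℕ → ℝ} (hz : ∀ p, |z p| ≤ 2) (p : ℕ) :
    (1 / 4 : ℝ) ^ p * (z (p + 1) / 2) ^ 2 ≤ (1 / 4) ^ p := by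
  refine mul_le_of_le_one_right (by positivity) ?_
  rw [sq_le_one_iff_abs_le_one, abs_div, abs_two, div_le_one two_pos]
  exact hz (p + 1)

lemma abs_covTerm_le {z : ℕ → ℝ} (hz : ∀ p, |z p| ≤ 2) {t : ℝ} (ht : |t| ≤ 1) (p : ℕ) :
    |covTerm z t p| ≤ (1 / 4) ^ p := by
  rw [covTerm_eq, abs_mul, abs_of_nonneg (by positivity), abs_pow]
  calc (1 / 4 : ℝ) ^ p * (z (p + 1) / 2) ^ 2 * |t| ^ (p + 1) ≤ (1 / 4) ^ p * 1 := by
        gcongr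
        · exact quarter_pow_mul_sq_half_le hz p
        · exact pow_le_one₀ (abs_nonneg t) ht
    _ = _ := mul_one _

lemma abs_covTerm_sub_covTerm_le {z : ℕ → ℝ} (hz : ∀ p, |z p| ≤ 2) {t u : ℝ}
    (ht : |t| ≤ 1) (hu : |u| ≤ 1) (p : ℕ) :
    |covTerm z t p - covTerm z u p| ≤ ((p : ℝ) + 1) * (1 / 4) ^ p * |t - u| := by
  have hpow : |t ^ (p + 1) - u ^ (p + 1)| ≤ ((p : ℝ) + 1) * |t - u| := by
    calc |t ^ (p + 1) - u ^ (p + 1)| ≤ |t - u| * (p + 1 : ℕ) * max |t| |u| ^ p :=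
          abs_pow_sub_pow_le ..
      _ ≤ |t - u| * ((p : ℝ) + 1) * 1 := by
          push_cast
          gcongr
          exact pow_le_one₀ (le_max_of_le_left (abs_nonneg t)) (max_le ht hu)
      _ = _ := by ring
  calc |covTerm z t p - covTerm z u p|
      = (1 / 4) ^ p * (z (p + 1) / 2) ^ 2 * |t ^ (p + 1) - u ^ (p + 1)| := by
        rw [covTerm_eq, covTerm_eq, ← mul_sub, abs_mul, abs_of_nonneg (by positivity)]
    _ ≤ (1 / 4) ^ p * (((p : ℝ) + 1) * |t - u|) := by
        gcongr
        exact quarter_pow_mul_sq_half_le hz p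
    _ = _ := by ring

lemma summable_covTerm {z : ℕ → ℝ} (hz : ∀ p, |z p| ≤ 2) {t : ℝ} (ht : |t| ≤ 1) :
    Summable (covTerm z t) :=
  .of_norm_bounded hasSum_quarter_pow.summable (abs_covTerm_le hz ht)

lemma abs_tsum_covTerm_le {z : ℕ → ℝ} (hz : ∀ p, |z p| ≤ 2) {t : ℝ} (ht : |t| ≤ 1) :
    |∑' p, covTerm z t p| ≤ 4 / 3 :=
  tsum_of_norm_bounded (f := covTerm z t) hasSum_quarter_pow (abs_covTerm_le hz ht)

lemma abs_tsum_covTerm_sub_tsum_covTerm_le {z : ℕ → ℝ} (hz : ∀ p, |z p| ≤ 2) {t u : ℝ}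
    (ht : |t| ≤ 1) (hu : |u| ≤ 1) :
    |∑' p, covTerm z t p - ∑' p, covTerm z u p| ≤ 16 / 9 * |t - u| := by
  rw [← (summable_covTerm hz ht).tsum_sub (summable_covTerm hz hu)]
  exact tsum_of_norm_bounded (f := fun p => covTerm z t p - covTerm z u p) (hasSum_succ_mul_quarter_pow.mul_right |t - u|)
    (abs_covTerm_sub_covTerm_le hz ht hu)

lemma abs_weightedAvg_le_one {a b r s : ℝ} (ha : 0 ≤ a) (hb : 0 ≤ b) (hab : 0 < a + b)
    (hr : |r| ≤ 1) (hs : |s| ≤ 1) : |(a * r + b * s) / (a + b)| ≤ 1 := by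
  rw [abs_div, abs_of_pos hab, div_le_one hab]
  calc |a * r + b * s| ≤ a * |r| + b * |s| := by
        simpa only [abs_mul, abs_of_nonneg ha, abs_of_nonneg hb] using abs_add_le (a * r) (b * s)
    _ ≤ a * 1 + b * 1 := by gcongr
    _ = a + b := by ring

lemma abs_weightedAvg_sub_le {a b r s : ℝ} (hb : 0 ≤ b) (hab : 0 < a + b)
    (hr : |r| ≤ 1) (hs : |s| ≤ 1) : |(a * r + b * s) / (a + b) - r| ≤ 2 * b / (a + b) := by
  have h : (a * r + b * s) / (a + b) - r = b * (s - r) / (a + b) := by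
    field_simp
    ring
  rw [h, abs_div, abs_of_pos hab, abs_mul, abs_of_nonneg hb, mul_comm 2 b]
  gcongr
  calc |s - r| ≤ |s| + |r| := abs_sub _ _
    _ ≤ 2 := by linarith

lemma abs_mul_tsum_covTerm_sub_le {x y : ℕ → ℝ} (hx : ∀ p, |x p| ≤ 2) (hy : ∀ p, |y p| ≤ 2)
    {A B C a b r s : ℝ} (hA : 0 ≤ A) (hBA : B ≤ A) (hC : 0 ≤ C)
    (ha : 0 ≤ a) (hb : 0 ≤ b) (hab : 0 < a + b) (hr : |r| ≤ 1) (hs : |s| ≤ 1) :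
    |A * ∑' p, covTerm x ((a * r + b * s) / (a + b)) p - B * ∑' p, covTerm x r p
        - C * ∑' p, covTerm y s p| ≤
      2 * b / (a + b) * A * (16 / 9) + (A - B) * (4 / 3) + C * (4 / 3) := by
  set R := (a * r + b * s) / (a + b)
  have hR : |R| ≤ 1 := abs_weightedAvg_le_one ha hb hab hr hs
  have hdiff := abs_tsum_covTerm_sub_tsum_covTerm_le hx hR hr
  have hRr : |R - r| ≤ 2 * b / (a + b) := abs_weightedAvg_sub_le hb hab hr hs
  have hxr := abs_tsum_covTerm_le hx hr
  have hys := abs_tsum_covTerm_le hy hs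
  calc _ = |A * (∑' p, covTerm x R p - ∑' p, covTerm x r p) + (A - B) * ∑' p, covTerm x r p
          - C * ∑' p, covTerm y s p| := by ring_nf
    _ ≤ A * |∑' p, covTerm x R p - ∑' p, covTerm x r p| + (A - B) * |∑' p, covTerm x r p|
          + C * |∑' p, covTerm y s p| := by
        refine (abs_sub _ _).trans (add_le_add ((abs_add_le _ _).trans_eq ?_) ?_)
        · rw [abs_mul, abs_mul, abs_of_nonneg hA, abs_of_nonneg (sub_nonneg.2 hBA)]
        · rw [abs_mul, abs_of_nonneg hC]
    _ ≤ A * (16 / 9 * (2 * b / (a + b))) + (A - B) * (4 / 3) + C * (4 / 3) := by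
        gcongr
        exact hdiff.trans (by gcongr)
    _ = _ := by ring

lemma bound_le_mul_rpow_add_rpow {N M e : ℝ} (hN : 0 ≤ N) (hM : 0 < M) (he0 : 0 ≤ e) (he1 : e ≤ 1) :
    2 * M / (N + M) * (N + M) ^ e * (16 / 9) + ((N + M) ^ e - N ^ e) * (4 / 3)
        + M ^ e * (4 / 3) ≤ 4 * M * (N + M) ^ (e - 1) + 4 * M ^ e := by
  have hNM : 0 < N + M := by linarith
  have hsub : (N + M) ^ e - N ^ e ≤ M ^ e := by
    linarith [rpow_add_le_add_rpow hN hM.le he0 he1]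
  have hfirst : 2 * M / (N + M) * (N + M) ^ e = 2 * (M * (N + M) ^ (e - 1)) := by
    rw [rpow_sub_one hNM.ne']
    ring
  have h1 : 0 ≤ M * (N + M) ^ (e - 1) := by positivity
  have h2 : 0 ≤ M ^ e := by positivity
  rw [hfirst]
  nlinarith

/-- Bound on the covariance difference of the perturbation terms: with `s_N = N^c`,
`η_N^x(t) = s_N² Σ_{p≥1} 4^{-p} x_p² t^p`, `R = (N·R¹ + M·R²)/(N+M)`,
`|η_{N+M}^x(R) - η_N^x(R¹) - η_M^y(R²)|
  ≤ (2M/(N+M))·s_{N+M}²·Σ_{p≥1} 4^{1-p} p + (s_{N+M}² - s_N²)·Σ_{p≥1} 4^{1-p}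
    + s_M²·Σ_{p≥1} 4^{1-p}`,
and for `N` large this is at most `C·M·(N+M)^{2c-1} + C·M^{2c}` for a universal `C > 0`. -/
theorem stmt15 (c : ℝ) (hc1 : 1 / 4 < c) (hc2 : c < 1 / 2)
    (x y : ℕ → ℝ) (hx : ∀ p, x p ∈ Set.Icc (1 : ℝ) 2) (hy : ∀ p, y p ∈ Set.Icc (1 : ℝ) 2)
    (sN : ℕ → ℝ) (hsN : ∀ n : ℕ, sN n = (n : ℝ) ^ c)
    (η : ℕ → (ℕ → ℝ) → ℝ → ℝ)
    (hη : ∀ (n : ℕ) (z : ℕ → ℝ) (t : ℝ),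
      η n z t = (sN n) ^ 2 * ∑' p : ℕ, (4 : ℝ) ^ (-((p : ℝ) + 1)) * (z (p + 1)) ^ 2 * t ^ (p + 1)) :
    (∀ N M : ℕ, 1 ≤ N → 1 ≤ M → ∀ R₁ R₂ : ℝ,
      R₁ ∈ Set.Icc (-1 : ℝ) 1 → R₂ ∈ Set.Icc (-1 : ℝ) 1 →
      |η (N + M) x (((N : ℝ) * R₁ + M * R₂) / ((N : ℝ) + M)) - η N x R₁ - η M y R₂| ≤
        2 * M / ((N : ℝ) + M) * (sN (N + M)) ^ 2 * (∑' p : ℕ, (4 : ℝ) ^ (-(p : ℝ)) * ((p : ℝ) + 1)) +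
        ((sN (N + M)) ^ 2 - (sN N) ^ 2) * (∑' p : ℕ, (4 : ℝ) ^ (-(p : ℝ))) +
        (sN M) ^ 2 * (∑' p : ℕ, (4 : ℝ) ^ (-(p : ℝ)))) ∧
    (∃ C > (0 : ℝ), ∀ M : ℕ, 1 ≤ M → ∃ N₀ : ℕ, ∀ N : ℕ, N₀ ≤ N →
      2 * M / ((N : ℝ) + M) * (sN (N + M)) ^ 2 * (∑' p : ℕ, (4 : ℝ) ^ (-(p : ℝ)) * ((p : ℝ) + 1)) +
        ((sN (N + M)) ^ 2 - (sN N) ^ 2) * (∑' p : ℕ, (4 : ℝ) ^ (-(p : ℝ))) +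
        (sN M) ^ 2 * (∑' p : ℕ, (4 : ℝ) ^ (-(p : ℝ))) ≤
      C * M * ((N : ℝ) + M) ^ (2 * c - 1) + C * (M : ℝ) ^ (2 * c)) := by
  have hsq : ∀ n : ℕ, sN n ^ 2 = (n : ℝ) ^ (2 * c) := fun n => by
    rw [hsN, ← rpow_mul_natCast (Nat.cast_nonneg n), mul_comm]
    norm_num
  have habs : ∀ z : ℕ → ℝ, (∀ p, z p ∈ Set.Icc (1 : ℝ) 2) → ∀ p, |z p| ≤ 2 :=
    fun z hz p => abs_le.2 ⟨by linarith [(hz p).1], (hz p).2⟩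
  rw [tsum_four_rpow_neg_mul_succ, tsum_four_rpow_neg]
  refine ⟨fun N M _ hM R₁ R₂ hR₁ hR₂ => ?_, ⟨4, by norm_num, fun M hM => ⟨0, fun N _ => ?_⟩⟩⟩
  · have hmono : sN N ^ 2 ≤ sN (N + M) ^ 2 := by
      rw [hsq, hsq]
      gcongr
      exact Nat.le_add_right N M
    simp only [hη]
    exact abs_mul_tsum_covTerm_sub_le (habs x hx) (habs y hy) (sq_nonneg _) hmono (sq_nonneg _)
      (Nat.cast_nonneg N) (Nat.cast_nonneg M) (by positivity) (abs_le.2 hR₁) (abs_le.2 hR₂)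
  · simp only [hsq, Nat.cast_add]
    exact bound_le_mul_rpow_add_rpow (Nat.cast_nonneg N) (by exact_mod_cast hM) (by linarith)
      (by linarith)
end
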